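/- Let ε_c < 0 with ε_c ≠ -1, and set λ₀ = (ε_c + 1)/(2(ε_c - 1)), so that λ₀ ∈ (-1/2, 0) ∪ (0, 1/2). For δ > 0 set λ(δ) = (ε_c + 1 + iδ)/(2(ε_c - 1) + 2iδ) ∈ ℂ. Let Q : ℝ → [0, ∞) be Lebesgue integrable, vanish outside [-1/2, 1/2], and be continuous at λ₀. Then lim_{δ → 0⁺} δ ∫_{-1/2}^{1/2} Q(t)/|λ(δ) - t|² dt = π |ε_c - 1| Q(λ₀) / (1/2 - λ₀). In particular the spectral quantity δ‖φ^δ‖²_{-1/2} = δ ∫ Q(t)/|λ(δ)-t|² dt converges to a finite limit proportional to Q(λ₀) as the dissipation δ tends to 0. -/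

import Mathlib

/-!
Write `λ(δ) = a(δ) - i y(δ)`. Then `y(δ) = δ / ((ε_c - 1)² + δ²)`, so
`δ / |λ(δ) - t|² = ((ε_c - 1)² + δ²) · P_{y(δ)}(t - a(δ))` with the Poisson kernel
`P_y(x) = y / (x² + y²)` of the upper half-plane. As `δ → 0⁺`, `a(δ) → λ₀` and `y(δ) → 0⁺`, and
`P_y(· - a)` is an approximate identity of mass `π`: on a ball around `λ₀` its mass tends to `π`
(an arctangent computation) and `Q` is close to `Q(λ₀)` there, while off the ball the kernel is
`O(y)` uniformly, which the integrability of `Q` turns into a vanishing contribution. The limit is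
`(ε_c - 1)² π Q(λ₀)`, which is the stated value because `1/2 - λ₀ = 1/(1 - ε_c)`.
-/

open MeasureTheory Set Filter Real

noncomputable section

/-- `λ(δ) = (ε_c + 1 + iδ)/(2(ε_c - 1) + 2iδ)`. -/
def lamPlasmon (εc δ : ℝ) : ℂ :=
  ((εc : ℂ) + 1 + Complex.I * δ) / (2 * ((εc : ℂ) - 1) + 2 * Complex.I * δ)

/-- `λ₀ = (ε_c + 1)/(2(ε_c - 1))`. -/
def lam0 (εc : ℝ) : ℝ := (εc + 1) / (2 * (εc - 1))

open Topology

/-- Normalized to total mass `π`, not `1`. -/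
def halfPlanePoissonKernel (y x : ℝ) : ℝ := y / (x ^ 2 + y ^ 2)

section HalfPlanePoissonKernel

variable {y : ℝ}

lemma halfPlanePoissonKernel_eq (hy : y ≠ 0) (x : ℝ) :
    halfPlanePoissonKernel y x = y⁻¹ * (1 + (x / y) ^ 2)⁻¹ := by
  rw [halfPlanePoissonKernel]
  field_simp
  ring

lemma halfPlanePoissonKernel_nonneg (hy : 0 ≤ y) (x : ℝ) : 0 ≤ halfPlanePoissonKernel y x := by
  unfold halfPlanePoissonKernel
  positivity

lemma halfPlanePoissonKernel_le_inv (hy : 0 < y) (x : ℝ) : halfPlanePoissonKernel y x ≤ y⁻¹ := by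
  rw [halfPlanePoissonKernel_eq hy.ne']
  exact mul_le_of_le_one_right (inv_nonneg.2 hy.le) (inv_le_one_of_one_le₀ (by nlinarith))

lemma halfPlanePoissonKernel_le_div_sq (hy : 0 ≤ y) {r x : ℝ} (hr : 0 < r) (hx : r ≤ |x|) :
    halfPlanePoissonKernel y x ≤ y / r ^ 2 := by
  have : r ^ 2 ≤ x ^ 2 := by simpa only [sq_abs] using pow_le_pow_left₀ hr.le hx 2
  exact div_le_div_of_nonneg_left hy (by positivity) (by nlinarith [sq_nonneg y])

lemma integrable_halfPlanePoissonKernel_sub (hy : y ≠ 0) (a : ℝ) :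
    Integrable fun t => halfPlanePoissonKernel y (t - a) := by
  simp_rw [halfPlanePoissonKernel_eq hy]
  exact ((integrable_inv_one_add_sq.comp_div hy).const_mul y⁻¹).comp_sub_right a

lemma integrable_halfPlanePoissonKernel_sub_mul (hy : 0 < y) (a : ℝ) {Q : ℝ → ℝ}
    (hQ : Integrable Q) : Integrable fun t => halfPlanePoissonKernel y (t - a) * Q t :=
  hQ.bdd_mul (integrable_halfPlanePoissonKernel_sub hy.ne' a).aestronglyMeasurable
    (ae_of_all _ fun t => by
      rw [Real.norm_of_nonneg (halfPlanePoissonKernel_nonneg hy.le _)]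
      exact halfPlanePoissonKernel_le_inv hy _)

lemma integral_halfPlanePoissonKernel_sub (hy : y ≠ 0) (a u v : ℝ) :
    ∫ t in u..v, halfPlanePoissonKernel y (t - a) =
      arctan ((v - a) / y) - arctan ((u - a) / y) := by
  simp_rw [halfPlanePoissonKernel_eq hy, intervalIntegral.integral_const_mul,
    intervalIntegral.integral_comp_sub_right (fun x => (1 + (x / y) ^ 2)⁻¹) a,
    intervalIntegral.inv_mul_integral_comp_div (f := fun x => (1 + x ^ 2)⁻¹),
    integral_inv_one_add_sq]

lemma setIntegral_ball_halfPlanePoissonKernel_sub (hy : y ≠ 0) (a x₀ : ℝ) {r : ℝ} (hr : 0 ≤ r) :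
    ∫ t in Metric.ball x₀ r, halfPlanePoissonKernel y (t - a) =
      arctan ((x₀ + r - a) / y) - arctan ((x₀ - r - a) / y) := by
  rw [Real.ball_eq_Ioo, ← integral_Ioc_eq_integral_Ioo,
    ← intervalIntegral.integral_of_le (by linarith), integral_halfPlanePoissonKernel_sub hy]

lemma abs_setIntegral_ball_halfPlanePoissonKernel_sub_mul_sub_le (hy : 0 < y) (a x₀ : ℝ) {r : ℝ}
    (hr : 0 < r) {Q : ℝ → ℝ} {q ε : ℝ} (hQ : ∀ t ∈ Metric.ball x₀ r, |Q t - q| ≤ ε) :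
    |∫ t in Metric.ball x₀ r, halfPlanePoissonKernel y (t - a) * (Q t - q)| ≤ π * ε := by
  have hε : 0 ≤ ε := (abs_nonneg _).trans (hQ x₀ (Metric.mem_ball_self hr))
  have h_mass : ∫ t in Metric.ball x₀ r, halfPlanePoissonKernel y (t - a) ≤ π := by
    rw [setIntegral_ball_halfPlanePoissonKernel_sub hy.ne' a x₀ hr.le]
    linarith [arctan_lt_pi_div_two ((x₀ + r - a) / y),
      neg_pi_div_two_lt_arctan ((x₀ - r - a) / y)]
  calc |∫ t in Metric.ball x₀ r, halfPlanePoissonKernel y (t - a) * (Q t - q)|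
      ≤ ∫ t in Metric.ball x₀ r, halfPlanePoissonKernel y (t - a) * ε := by
        rw [← Real.norm_eq_abs]
        refine norm_integral_le_of_norm_le
          ((integrable_halfPlanePoissonKernel_sub hy.ne' a).integrableOn.mul_const ε) ?_
        refine (ae_restrict_iff' Metric.isOpen_ball.measurableSet).2 (ae_of_all _ fun t ht => ?_)
        rw [Real.norm_eq_abs, abs_mul, abs_of_nonneg (halfPlanePoissonKernel_nonneg hy.le _)]
        exact mul_le_mul_of_nonneg_left (hQ t ht) (halfPlanePoissonKernel_nonneg hy.le _)
    _ = (∫ t in Metric.ball x₀ r, halfPlanePoissonKernel y (t - a)) * ε := integral_mul_const _ _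
    _ ≤ π * ε := mul_le_mul_of_nonneg_right h_mass hε

variable {ι : Type*} {l : Filter ι} {a y : ι → ℝ} {x₀ : ℝ}

lemma tendsto_setIntegral_ball_halfPlanePoissonKernel_sub (ha : Tendsto a l (𝓝 x₀))
    (hy : Tendsto y l (𝓝[>] 0)) {r : ℝ} (hr : 0 < r) :
    Tendsto (fun i => ∫ t in Metric.ball x₀ r, halfPlanePoissonKernel (y i) (t - a i)) l
      (𝓝 π) := by
  have hy_inv : Tendsto (fun i => (y i)⁻¹) l atTop := tendsto_inv_nhdsGT_zero.comp hy
  have h_upper : Tendsto (fun i => (x₀ + r - a i) / y i) l atTop := by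
    simpa [div_eq_mul_inv] using
      (tendsto_const_nhds.sub ha).pos_mul_atTop (by simpa using hr) hy_inv
  have h_lower : Tendsto (fun i => (x₀ - r - a i) / y i) l atBot := by
    simpa [div_eq_mul_inv] using
      (tendsto_const_nhds.sub ha).neg_mul_atTop (by simpa using hr) hy_inv
  have h_arctan := ((tendsto_arctan_atTop.mono_right nhdsWithin_le_nhds).comp h_upper).sub
    ((tendsto_arctan_atBot.mono_right nhdsWithin_le_nhds).comp h_lower)
  rw [show π = π / 2 - -(π / 2) by ring]
  refine h_arctan.congr' ?_
  filter_upwards [hy self_mem_nhdsWithin] with i (hi : 0 < y i)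
  exact (setIntegral_ball_halfPlanePoissonKernel_sub hi.ne' (a i) x₀ hr.le).symm

lemma tendsto_setIntegral_compl_ball_halfPlanePoissonKernel_sub_mul {Q : ℝ → ℝ}
    (hQ : Integrable Q) (ha : Tendsto a l (𝓝 x₀)) (hy : Tendsto y l (𝓝[>] 0)) {r : ℝ}
    (hr : 0 < r) :
    Tendsto (fun i => ∫ t in (Metric.ball x₀ r)ᶜ, halfPlanePoissonKernel (y i) (t - a i) * Q t) l
      (𝓝 0) := by
  have h_bound : Tendsto (fun i => y i / (r / 2) ^ 2 * ∫ t, |Q t|) l (𝓝 0) := by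
    simpa using ((tendsto_nhds_of_tendsto_nhdsWithin hy).div_const ((r / 2) ^ 2)).mul_const _
  refine squeeze_zero_norm' ?_ h_bound
  filter_upwards [hy self_mem_nhdsWithin, ha (Metric.ball_mem_nhds x₀ (half_pos hr))]
    with i (hyi : 0 < y i) (hai : dist (a i) x₀ < r / 2)
  calc ‖∫ t in (Metric.ball x₀ r)ᶜ, halfPlanePoissonKernel (y i) (t - a i) * Q t‖
      ≤ ∫ t in (Metric.ball x₀ r)ᶜ, y i / (r / 2) ^ 2 * |Q t| := by
        refine norm_integral_le_of_norm_le (hQ.abs.const_mul _).integrableOn ?_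
        refine (ae_restrict_iff' Metric.isOpen_ball.measurableSet.compl).2
          (ae_of_all _ fun t ht => ?_)
        have h_far : r / 2 ≤ |t - a i| := by
          rw [mem_compl_iff, Metric.mem_ball, not_lt, Real.dist_eq] at ht
          rw [Real.dist_eq] at hai
          linarith [abs_sub_le t (a i) x₀]
        rw [Real.norm_eq_abs, abs_mul, abs_of_nonneg (halfPlanePoissonKernel_nonneg hyi.le _)]
        exact mul_le_mul_of_nonneg_right
          (halfPlanePoissonKernel_le_div_sq hyi.le (half_pos hr) h_far) (abs_nonneg _)
    _ ≤ ∫ t, y i / (r / 2) ^ 2 * |Q t| :=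
        setIntegral_le_integral (hQ.abs.const_mul _) (ae_of_all _ fun t => by positivity)
    _ = y i / (r / 2) ^ 2 * ∫ t, |Q t| := integral_const_mul _ _

theorem tendsto_integral_halfPlanePoissonKernel_sub_mul {Q : ℝ → ℝ} (hQ : Integrable Q)
    (hQx₀ : ContinuousAt Q x₀) (ha : Tendsto a l (𝓝 x₀)) (hy : Tendsto y l (𝓝[>] 0)) :
    Tendsto (fun i => ∫ t, halfPlanePoissonKernel (y i) (t - a i) * Q t) l (𝓝 (π * Q x₀)) := by
  rw [Metric.tendsto_nhds]
  intro ε hε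
  obtain ⟨r, hr, hQr⟩ := Metric.continuousAt_iff.mp hQx₀ (ε / (2 * π)) (by positivity)
  set s := Metric.ball x₀ r
  set P := fun i t => halfPlanePoissonKernel (y i) (t - a i)
  have h_rest : Tendsto (fun i => Q x₀ * (∫ t in s, P i t) + ∫ t in sᶜ, P i t * Q t) l
      (𝓝 (π * Q x₀)) := by
    rw [mul_comm π, ← add_zero (Q x₀ * π)]
    exact ((tendsto_setIntegral_ball_halfPlanePoissonKernel_sub ha hy hr).const_mul (Q x₀)).add
      (tendsto_setIntegral_compl_ball_halfPlanePoissonKernel_sub_mul hQ ha hy hr)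
  filter_upwards [Metric.tendsto_nhds.mp h_rest (ε / 2) (half_pos hε), hy self_mem_nhdsWithin]
    with i hi (hyi : 0 < y i)
  show dist (∫ t, P i t * Q t) (π * Q x₀) < ε
  have hP : Integrable (P i) := integrable_halfPlanePoissonKernel_sub hyi.ne' (a i)
  have hPQ : Integrable fun t => P i t * Q t :=
    integrable_halfPlanePoissonKernel_sub_mul hyi (a i) hQ
  have h_split_near : ∫ t in s, P i t * (Q t - Q x₀) =
      (∫ t in s, P i t * Q t) - (∫ t in s, P i t) * Q x₀ := by
    rw [← integral_mul_const, ← integral_sub hPQ.integrableOn (hP.integrableOn.mul_const _)]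
    simp_rw [mul_sub]
  have h_split : ∫ t, P i t * Q t =
      (∫ t in s, P i t * (Q t - Q x₀)) + (Q x₀ * (∫ t in s, P i t) + ∫ t in sᶜ, P i t * Q t) := by
    rw [h_split_near, ← integral_add_compl Metric.isOpen_ball.measurableSet hPQ]
    ring
  have h_near : |∫ t in s, P i t * (Q t - Q x₀)| ≤ π * (ε / (2 * π)) :=
    abs_setIntegral_ball_halfPlanePoissonKernel_sub_mul_sub_le hyi (a i) x₀ hr
      fun t ht => (hQr ht).le
  rw [Real.dist_eq] at hi ⊢
  calc |(∫ t, P i t * Q t) - π * Q x₀|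
      ≤ |∫ t in s, P i t * (Q t - Q x₀)| +
          |Q x₀ * (∫ t in s, P i t) + (∫ t in sᶜ, P i t * Q t) - π * Q x₀| := by
        rw [h_split]
        exact (abs_add_le _ _).trans_eq' (congrArg _ (add_sub_assoc _ _ _).symm)
    _ < π * (ε / (2 * π)) + ε / 2 := add_lt_add_of_le_of_lt h_near hi
    _ = ε := by field_simp; ring

end HalfPlanePoissonKernel

lemma Complex.sq_norm_sub_ofReal (z : ℂ) (t : ℝ) : ‖z - t‖ ^ 2 = (t - z.re) ^ 2 + z.im ^ 2 := by
  rw [Complex.sq_norm, Complex.normSq_apply]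
  simp only [Complex.sub_re, Complex.sub_im, Complex.ofReal_re, Complex.ofReal_im, sub_zero]
  ring

lemma neg_lamPlasmon_im (εc δ : ℝ) : -(lamPlasmon εc δ).im = δ / ((εc - 1) ^ 2 + δ ^ 2) := by
  rw [lamPlasmon, Complex.div_im, Complex.normSq_apply]
  simp only [Complex.add_im, Complex.ofReal_im, Complex.one_im, add_zero, Complex.mul_im,
    Complex.I_re, mul_zero, Complex.I_im, Complex.ofReal_re, one_mul, zero_add, Complex.add_re,
    Complex.mul_re, Complex.re_ofNat, Complex.sub_re, Complex.one_re, Complex.im_ofNat,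
    Complex.sub_im, sub_self, sub_zero, mul_one, zero_mul, neg_sub]
  field_simp
  ring

lemma tendsto_lamPlasmon {εc : ℝ} (hεc : εc ≠ 1) : Tendsto (lamPlasmon εc) (𝓝 0) (𝓝 (lam0 εc)) := by
  have hden : 2 * ((εc : ℂ) - 1) ≠ 0 := by
    simpa [sub_eq_zero] using hεc
  have hcont : ContinuousAt (lamPlasmon εc) 0 := by
    unfold lamPlasmon
    exact ContinuousAt.div (by fun_prop) (by fun_prop) (by simpa using hden)
  have hval : lamPlasmon εc 0 = lam0 εc := by
    simp [lamPlasmon, lam0]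
  simpa [hval] using hcont.tendsto

lemma tendsto_lamPlasmon_re {εc : ℝ} (hεc : εc ≠ 1) :
    Tendsto (fun δ => (lamPlasmon εc δ).re) (𝓝 0) (𝓝 (lam0 εc)) := by
  have h := (Complex.continuous_re.tendsto _).comp (tendsto_lamPlasmon hεc)
  rwa [Complex.ofReal_re] at h

lemma tendsto_neg_lamPlasmon_im {εc : ℝ} (hεc : εc ≠ 1) :
    Tendsto (fun δ => -(lamPlasmon εc δ).im) (𝓝[>] 0) (𝓝[>] 0) := by
  have h := ((Complex.continuous_im.tendsto _).comp (tendsto_lamPlasmon hεc)).neg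
  rw [Complex.ofReal_im, neg_zero] at h
  refine tendsto_nhdsWithin_iff.2 ⟨h.mono_left nhdsWithin_le_nhds, ?_⟩
  filter_upwards [self_mem_nhdsWithin] with δ (hδ : 0 < δ)
  rw [mem_Ioi, neg_lamPlasmon_im]
  positivity

lemma lam0_mem {εc : ℝ} (hεc : εc < 0) (hεc' : εc ≠ -1) :
    lam0 εc ∈ Ioo (-(1/2) : ℝ) 0 ∪ Ioo (0 : ℝ) (1/2) := by
  have hd : 2 * (εc - 1) < 0 := by linarith
  rw [lam0]
  rcases hεc'.lt_or_gt with h | h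
  · exact Or.inr ⟨div_pos_of_neg_of_neg (by linarith) hd, by rw [div_lt_iff_of_neg hd]; linarith⟩
  · exact Or.inl ⟨by rw [lt_div_iff_of_neg hd]; linarith, div_neg_of_pos_of_neg (by linarith) hd⟩

lemma one_half_sub_lam0 {εc : ℝ} (hεc : εc ≠ 1) : 1 / 2 - lam0 εc = 1 / (1 - εc) := by
  have : εc - 1 ≠ 0 := sub_ne_zero.2 hεc
  have : 1 - εc ≠ 0 := sub_ne_zero.2 hεc.symm
  rw [lam0]
  field_simp
  ring

lemma pi_mul_abs_sub_one_mul_div_one_half_sub_lam0 {εc : ℝ} (hεc : εc < 1) (q : ℝ) :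
    π * |εc - 1| * q / (1 / 2 - lam0 εc) = (εc - 1) ^ 2 * (π * q) := by
  rw [one_half_sub_lam0 hεc.ne, abs_of_neg (sub_neg.2 hεc)]
  field_simp
  ring

lemma mul_div_sq_norm_lamPlasmon_sub {εc δ : ℝ} (hδ : 0 < δ) (q t : ℝ) :
    δ * (q / ‖lamPlasmon εc δ - t‖ ^ 2) = ((εc - 1) ^ 2 + δ ^ 2) *
      (halfPlanePoissonKernel (-(lamPlasmon εc δ).im) (t - (lamPlasmon εc δ).re) * q) := by
  rw [Complex.sq_norm_sub_ofReal, halfPlanePoissonKernel, ← neg_sq (lamPlasmon εc δ).im,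
    neg_lamPlasmon_im]
  have : 0 < (εc - 1) ^ 2 + δ ^ 2 := by positivity
  field_simp

lemma mul_setIntegral_div_sq_norm_lamPlasmon_sub {εc δ : ℝ} (hδ : 0 < δ) {s : Set ℝ}
    (hs : MeasurableSet s) (Q : ℝ → ℝ) :
    δ * ∫ t in s, Q t / ‖lamPlasmon εc δ - t‖ ^ 2 = ((εc - 1) ^ 2 + δ ^ 2) *
      ∫ t, halfPlanePoissonKernel (-(lamPlasmon εc δ).im) (t - (lamPlasmon εc δ).re) *
        s.indicator Q t := by
  rw [← integral_indicator hs, ← integral_const_mul, ← integral_const_mul]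
  congr 1 with t
  rw [← mul_div_sq_norm_lamPlasmon_sub hδ]
  by_cases ht : t ∈ s
  · rw [indicator_of_mem ht, indicator_of_mem ht]
  · rw [indicator_of_notMem ht, indicator_of_notMem ht, zero_div]

theorem plasmon_resonance_crescent_blowup_rate_general
    (εc : ℝ) (hεc : εc < 0) (hεc' : εc ≠ -1)
    (Q : ℝ → ℝ) (hQint : Integrable Q)
    (hQcont : ContinuousAt Q (lam0 εc)) :
    lam0 εc ∈ Ioo (-(1/2) : ℝ) 0 ∪ Ioo (0 : ℝ) (1/2) ∧
    Tendsto
      (fun δ : ℝ =>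
        δ * ∫ t in Icc (-(1/2) : ℝ) (1/2), Q t / ‖lamPlasmon εc δ - (t : ℂ)‖ ^ 2)
      (nhdsWithin 0 (Ioi 0))
      (nhds (π * |εc - 1| * Q (lam0 εc) / (1/2 - lam0 εc))) := by
  have hεc1 : εc < 1 := hεc.trans one_pos
  have h_lam0 := lam0_mem hεc hεc'
  refine ⟨h_lam0, ?_⟩
  have hI : Icc (-(1/2) : ℝ) (1/2) ∈ 𝓝 (lam0 εc) := by
    rcases h_lam0 with h | h <;> exact Icc_mem_nhds (by linarith [h.1]) (by linarith [h.2])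
  have hQI : ContinuousAt ((Icc (-(1/2) : ℝ) (1/2)).indicator Q) (lam0 εc) :=
    hQcont.congr (eventually_of_mem hI fun t ht => (indicator_of_mem ht Q).symm)
  have h_poisson := tendsto_integral_halfPlanePoissonKernel_sub_mul
    (hQint.indicator measurableSet_Icc) hQI
    ((tendsto_lamPlasmon_re hεc1.ne).mono_left nhdsWithin_le_nhds)
    (tendsto_neg_lamPlasmon_im hεc1.ne)
  have h_scale : Tendsto (fun δ : ℝ => (εc - 1) ^ 2 + δ ^ 2) (𝓝[>] 0) (𝓝 ((εc - 1) ^ 2)) :=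
    ((continuous_const.add (continuous_pow 2)).tendsto' 0 _ (by simp)).mono_left
      nhdsWithin_le_nhds
  rw [pi_mul_abs_sub_one_mul_div_one_half_sub_lam0 hεc1, ← indicator_of_mem (mem_of_mem_nhds hI) Q]
  refine (h_scale.mul h_poisson).congr' ?_
  filter_upwards [self_mem_nhdsWithin] with δ (hδ : 0 < δ)
  exact (mul_setIntegral_div_sq_norm_lamPlasmon_sub hδ measurableSet_Icc Q).symm

/-- Rate of blow-up of the plasmon resonance for the crescent domain:
for `ε_c < 0`, `ε_c ≠ -1` (so that `λ₀ ∈ (-1/2,0) ∪ (0,1/2)`) and `Q ≥ 0` integrable,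
supported in `[-1/2,1/2]` and continuous at `λ₀`,
`δ‖φ^δ‖²_{-1/2} = δ ∫ Q(t)/|λ(δ)-t|² dt → π|ε_c - 1| Q(λ₀)/(1/2 - λ₀)` as `δ → 0⁺`. -/
theorem plasmon_resonance_crescent_blowup_rate
    (εc : ℝ) (hεc : εc < 0) (hεc' : εc ≠ -1)
    (Q : ℝ → ℝ) (hQnonneg : ∀ t, 0 ≤ Q t) (hQint : Integrable Q)
    (hQsupp : ∀ t : ℝ, t ∉ Icc (-(1/2) : ℝ) (1/2) → Q t = 0)
    (hQcont : ContinuousAt Q (lam0 εc)) :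
    lam0 εc ∈ Ioo (-(1/2) : ℝ) 0 ∪ Ioo (0 : ℝ) (1/2) ∧
    Tendsto
      (fun δ : ℝ =>
        δ * ∫ t in Icc (-(1/2) : ℝ) (1/2), Q t / ‖lamPlasmon εc δ - (t : ℂ)‖ ^ 2)
      (nhdsWithin 0 (Ioi 0))
      (nhds (π * |εc - 1| * Q (lam0 εc) / (1/2 - lam0 εc))) :=
  plasmon_resonance_crescent_blowup_rate_general εc hεc hεc' Q hQint hQcont
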